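/- Let A ⊆ X be a subspace and let M̄ = X ∪_{A×{0}} (A × [0,1]) be the mapping cylinder of the inclusion A ↪ X. Suppose {φ^t : X → X}_{t∈[0,1]} is a continuous family of maps with φ^0 = id, each φ^t(A) ⊆ X, and φ^1(A) ⊆ A. Define θ : M̄ → M̄ by θ(x) = x for x ∈ X and θ(a,t) = (φ^t(a), t) on the cylinder (interpreting φ^t(a) ∈ X when needed via the identification). Then θ is homotopic to the map induced by φ^1 as maps of pairs (M̄, A × {1}) → (M̄, A × {1}), via the homotopy H(x,s) = φ^s(x) on X and H(a,t,s) = (φ^{min(s+t,1)}(a), t) on A × [0,1]. -/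

import Mathlib

/-!
On `X` the homotopy is the flow `φ^s` itself; on the cylinder it pushes `(a, t)` along the
flow up to time `min (s + t) 1`. The two formulas agree on `A × {0}`, so they glue to a
continuous map on `M̄ × [0,1]` (glue the curried maps `M̄ → C([0,1], M̄)` and uncurry,
`[0,1]` being locally compact). At `s = 0` this is `θ` because `φ^0 = id`, and at `s = 1`
it is the map induced by `φ^1`; the level `t = 1` is preserved because `φ^t(A) ⊆ A`.
-/

open unitInterval

/-- The mapping cylinder of the inclusion `A ↪ X`: the quotient of `X ⊔ (A × [0,1])`
identifying `a ∼ (a, 0)`. -/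
def MappingCyl {X : Type*} [TopologicalSpace X] (A : Set X) : Type _ :=
  Quot (fun p q : X ⊕ (A × unitInterval) =>
    ∃ a : A, p = Sum.inl (a : X) ∧ q = Sum.inr (a, 0))

instance {X : Type*} [TopologicalSpace X] (A : Set X) : TopologicalSpace (MappingCyl A) :=
  instTopologicalSpaceQuot

namespace unitInterval

def truncAdd (s t : I) : I :=
  ⟨min ((s : ℝ) + (t : ℝ)) 1,
    ⟨le_min (add_nonneg s.2.1 t.2.1) zero_le_one, min_le_right _ _⟩⟩

@[fun_prop]
theorem continuous_truncAdd : Continuous fun p : I × I => truncAdd p.1 p.2 :=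
  Continuous.subtype_mk (by fun_prop) _

@[simp]
theorem truncAdd_zero (s : I) : truncAdd s 0 = s :=
  Subtype.ext (by simp [truncAdd, s.2.2])

@[simp]
theorem zero_truncAdd (t : I) : truncAdd 0 t = t :=
  Subtype.ext (by simp [truncAdd, t.2.2])

@[simp]
theorem one_truncAdd (t : I) : truncAdd 1 t = 1 :=
  Subtype.ext (by simp [truncAdd, t.2.1])

end unitInterval

namespace MappingCyl

variable {X Y : Type*} [TopologicalSpace X] [TopologicalSpace Y] {A : Set X}

def lift (f : C(X, Y)) (g : C(A × I, Y)) (h : ∀ a : A, f a = g (a, 0)) :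
    C(MappingCyl A, Y) :=
  ⟨Quot.lift (Sum.elim f g) (by rintro _ _ ⟨a, rfl, rfl⟩; exact h a),
    continuous_quot_lift _ (f.continuous.sumElim g.continuous)⟩

def liftProd {Z : Type*} [TopologicalSpace Z] [LocallyCompactSpace Z]
    (f : C(X × Z, Y)) (g : C((A × I) × Z, Y)) (h : ∀ (a : A) (z : Z), f (a, z) = g ((a, 0), z)) :
    C(MappingCyl A × Z, Y) :=
  (lift f.curry g.curry fun a => ContinuousMap.ext (h a)).uncurry

def restrictFamily (φ : C(I × X, X)) (hφA : ∀ (t : I) (x : X), x ∈ A → φ (t, x) ∈ A) :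
    C(I × A, A) :=
  ⟨fun p => ⟨φ (p.1, p.2), hφA _ _ p.2.2⟩, Continuous.subtype_mk (by fun_prop) _⟩

def flowHomotopy (φ : C(I × X, X)) (hφA : ∀ (t : I) (x : X), x ∈ A → φ (t, x) ∈ A) :
    C(MappingCyl A × I, MappingCyl A) :=
  liftProd
    ⟨fun p => Quot.mk _ (Sum.inl (φ (p.2, p.1))), by fun_prop⟩
    ⟨fun p => Quot.mk _ (Sum.inr (restrictFamily φ hφA (truncAdd p.2 p.1.2, p.1.1), p.1.2)),
      by fun_prop⟩
    fun a s => by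
      change _ = Quot.mk _ (Sum.inr (restrictFamily φ hφA (truncAdd s 0, a), 0))
      rw [truncAdd_zero]
      exact Quot.sound ⟨restrictFamily φ hφA (s, a), rfl, rfl⟩

variable (φ : C(I × X, X)) (hφA : ∀ (t : I) (x : X), x ∈ A → φ (t, x) ∈ A)

theorem flowHomotopy_inl (x : X) (s : I) :
    flowHomotopy φ hφA (Quot.mk _ (Sum.inl x), s) = Quot.mk _ (Sum.inl (φ (s, x))) :=
  rfl

theorem flowHomotopy_inr (a : A) (t s : I) :
    flowHomotopy φ hφA (Quot.mk _ (Sum.inr (a, t)), s) =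
      Quot.mk _ (Sum.inr (⟨φ (truncAdd s t, a), hφA _ a a.2⟩, t)) :=
  rfl

end MappingCyl

open MappingCyl

/-- Given a continuous family `φ^t : X → X` with `φ^0 = id` and `φ^t(A) ⊆ A`, the map `θ`
of the mapping cylinder `M̄ = X ∪_{A×{0}} (A × [0,1])` given by the identity on `X` and
`(a,t) ↦ (φ^t a, t)` on the cylinder is homotopic, as a map of pairs
`(M̄, A × {1}) → (M̄, A × {1})`, to the map `Φ` induced by `φ^1`, via the homotopy
`H(x,s) = φ^s(x)` on `X` and `H(a,t,s) = (φ^{min(s+t,1)} a, t)` on the cylinder. -/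
theorem stmt6 {X : Type*} [TopologicalSpace X] (A : Set X)
    (φ : C(unitInterval × X, X))
    (hφ0 : ∀ x : X, φ (0, x) = x)
    (hφA : ∀ (t : unitInterval) (x : X), x ∈ A → φ (t, x) ∈ A) :
    ∃ θ Φ : C(MappingCyl A, MappingCyl A),
      (∀ x : X, θ (Quot.mk _ (Sum.inl x)) = Quot.mk _ (Sum.inl x)) ∧
      (∀ (a : A) (t : unitInterval),
        θ (Quot.mk _ (Sum.inr (a, t))) = Quot.mk _ (Sum.inr (⟨φ (t, a), hφA t a a.2⟩, t))) ∧
      (∀ x : X, Φ (Quot.mk _ (Sum.inl x)) = Quot.mk _ (Sum.inl (φ (1, x)))) ∧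
      (∀ (a : A) (t : unitInterval),
        Φ (Quot.mk _ (Sum.inr (a, t))) = Quot.mk _ (Sum.inr (⟨φ (1, a), hφA 1 a a.2⟩, t))) ∧
      ∃ H : C(MappingCyl A × unitInterval, MappingCyl A),
        (∀ m : MappingCyl A, H (m, 0) = θ m) ∧
        (∀ m : MappingCyl A, H (m, 1) = Φ m) ∧
        (∀ (x : X) (s : unitInterval),
          H (Quot.mk _ (Sum.inl x), s) = Quot.mk _ (Sum.inl (φ (s, x)))) ∧
        (∀ (a : A) (t s : unitInterval),
          H (Quot.mk _ (Sum.inr (a, t)), s) =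
            Quot.mk _ (Sum.inr
              (⟨φ (⟨min ((s : ℝ) + (t : ℝ)) 1,
                  ⟨le_min (add_nonneg s.2.1 t.2.1) zero_le_one, min_le_right _ _⟩⟩, a),
                hφA _ a a.2⟩, t))) ∧
        (∀ (a : A) (s : unitInterval),
          ∃ b : A, H (Quot.mk _ (Sum.inr (a, 1)), s) = Quot.mk _ (Sum.inr (b, 1))) := by
  let H := flowHomotopy φ hφA
  refine ⟨H.comp ⟨fun m => (m, 0), by fun_prop⟩, H.comp ⟨fun m => (m, 1), by fun_prop⟩,
    fun x => ?_, fun a t => ?_, fun x => ?_, fun a t => ?_,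
    H, fun _ => rfl, fun _ => rfl, flowHomotopy_inl φ hφA, flowHomotopy_inr φ hφA,
    fun a s => ⟨_, flowHomotopy_inr φ hφA a 1 s⟩⟩
  · exact (flowHomotopy_inl φ hφA x 0).trans (by rw [hφ0])
  · exact (flowHomotopy_inr φ hφA a t 0).trans (by rw [zero_truncAdd])
  · exact flowHomotopy_inl φ hφA x 1
  · exact (flowHomotopy_inr φ hφA a t 1).trans (by rw [one_truncAdd])
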